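/- Consider a PJR-Exact run of an approval-based multi-winner election, fix j with 0 ≤ j ≤ k−1, and suppose the first j iterations of the run are all normal. If a candidate c ∈ C \ W_j satisfies ℓ_j(c) ≥ 1 and ℓ_j(c) = max_{c' ∈ C \ W_j} ℓ_j(c') (c has maximum dissatisfaction level among unelected candidates), then c is in a normal state after j iterations. -/

import Mathlib

/-!
By induction over the normal iterations, a voter `i` keeps at least the fraction
`(ℓ - |A_i ∩ W_j|) / ℓ` of her vote whenever she approves an unelected candidate of level
`ℓ > |A_i ∩ W_j|`: levels only drop as `W_j` grows, a voter not approving `w_j` keeps her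
fraction, and a voter who pays for `w_j` is protected by the normality of that iteration.
For a candidate `c` of maximum level `ℓ` this leaves each of the at least `ℓ·n/k` supporters
of `c` with fewer than `ℓ` representatives a surplus `f_i - g_i(c) ≥ 1/ℓ`, and these surpluses
add up to the quota `n/k`.
-/

open Finset

variable {C : Type*} [Fintype C] [DecidableEq C]

/-- The voters approving candidate `c`. -/
def approvers {n : ℕ} (A : Fin n → Finset C) (c : C) : Finset (Fin n) :=
  Finset.univ.filter (fun i => c ∈ A i)

/-- The exact quota `q = n / k`. -/
def quota (n k : ℕ) : ℚ := (n : ℚ) / (k : ℚ)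

/-- Remaining support of candidate `c` under vote fractions `f`. -/
def supp {n : ℕ} (A : Fin n → Finset C) (f : Fin n → ℚ) (c : C) : ℚ :=
  ∑ i ∈ approvers A c, f i

/-- The set `W_j = {w_1, …, w_j}` of the first `j` winners. -/
def Wset (w : ℕ → C) (j : ℕ) : Finset C := (Finset.Icc 1 j).image w

/-- The candidates approved by every voter in `Ns`, i.e. `⋂_{i ∈ Ns} A i`. -/
def commonApproved {n : ℕ} (A : Fin n → Finset C) (Ns : Finset (Fin n)) : Finset C :=
  Finset.univ.filter (fun c => ∀ i ∈ Ns, c ∈ A i)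

/-- `Ns` is an `ℓ`-cohesive group of voters: `|Ns| ≥ ℓ·n/k` and `|⋂_{i ∈ Ns} A i| ≥ ℓ`. -/
def Cohesive {n : ℕ} (A : Fin n → Finset C) (k ℓ : ℕ) (Ns : Finset (Fin n)) : Prop :=
  (ℓ : ℚ) * (n : ℚ) / (k : ℚ) ≤ (Ns.card : ℚ) ∧ ℓ ≤ (commonApproved A Ns).card

/-- `W` provides proportional justified representation for `(A, k)`. -/
def ProvidesPJR {n : ℕ} (A : Fin n → Finset C) (k : ℕ) (W : Finset C) : Prop :=
  ∀ ℓ : ℕ, 1 ≤ ℓ → ℓ ≤ k → ∀ Ns : Finset (Fin n), Cohesive A k ℓ Ns →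
    ℓ ≤ (W ∩ Ns.biUnion A).card

/-- `W` provides extended justified representation for `(A, k)`. -/
def ProvidesEJR {n : ℕ} (A : Fin n → Finset C) (k : ℕ) (W : Finset C) : Prop :=
  ∀ ℓ : ℕ, 1 ≤ ℓ → ℓ ≤ k → ∀ Ns : Finset (Fin n), Cohesive A k ℓ Ns →
    ∃ i ∈ Ns, ℓ ≤ (A i ∩ W).card

/-- The set of `ℓ`'s satisfying the dissatisfaction-level fixpoint equation
`ℓ = ⌊(k/n)·|{i : c ∈ A_i ∧ |A_i ∩ W| < ℓ}|⌋`
(natural-number division `k * m / n` is exactly the floor `⌊(k/n)·m⌋`). -/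
def dissatSet {n : ℕ} (A : Fin n → Finset C) (k : ℕ) (W : Finset C) (c : C) : Set ℕ :=
  {ℓ : ℕ | ℓ = k * (Finset.univ.filter (fun i => c ∈ A i ∧ (A i ∩ W).card < ℓ)).card / n}

/-- The dissatisfaction level `ℓ(c, W)`: the largest non-negative integer satisfying
the fixpoint equation. -/
noncomputable def dissat {n : ℕ} (A : Fin n → Finset C) (k : ℕ) (W : Finset C) (c : C) : ℕ :=
  sSup (dissatSet A k W c)

/-- `ℓ_W(i, c) = max_{c' ∈ A_i \ (W ∪ {c})} ℓ(c', W)` (with `max ∅ = 0`). -/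
noncomputable def dissatVoter {n : ℕ} (A : Fin n → Finset C) (k : ℕ) (W : Finset C)
    (i : Fin n) (c : C) : ℕ :=
  (A i \ insert c W).sup (dissat A k W)

/-- `ℓ_W(i) = max_{c ∈ A_i \ W} ℓ(c, W)` (with `max ∅ = 0`). -/
noncomputable def dissatVoterAll {n : ℕ} (A : Fin n → Finset C) (k : ℕ) (W : Finset C)
    (i : Fin n) : ℕ :=
  (A i \ W).sup (dissat A k W)

/-- `g_i(c)` relative to the committee `W`. -/
noncomputable def gfun {n : ℕ} (A : Fin n → Finset C) (k : ℕ) (W : Finset C)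
    (i : Fin n) (c : C) : ℚ :=
  if dissatVoter A k W i c ≤ (A i ∩ W).card then 0
  else ((dissatVoter A k W i c : ℚ) - ((A i ∩ W).card : ℚ) - 1) / (dissatVoter A k W i c : ℚ)

/-- Candidate `c ∉ W` is in a normal state (w.r.t. committee `W` and fractions `f`). -/
def NormalState {n : ℕ} (A : Fin n → Finset C) (k : ℕ) (f : Fin n → ℚ) (W : Finset C)
    (c : C) : Prop :=
  (∀ i : Fin n, c ∈ A i → (A i ∩ W).card < dissatVoter A k W i c →
      ((dissatVoter A k W i c : ℚ) - ((A i ∩ W).card : ℚ)) / (dissatVoter A k W i c : ℚ) ≤ f i) ∧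
  quota n k ≤ ∑ i ∈ approvers A c, (f i - gfun A k W i c)

/-- Candidate `c ∉ W` is in a starving state. -/
def StarvingState {n : ℕ} (A : Fin n → Finset C) (k : ℕ) (f : Fin n → ℚ) (W : Finset C)
    (c : C) : Prop :=
  ∃ i : Fin n, c ∈ A i ∧ (A i ∩ W).card < dissatVoter A k W i c ∧
    f i < ((dissatVoter A k W i c : ℚ) - ((A i ∩ W).card : ℚ)) / (dissatVoter A k W i c : ℚ)

/-- Candidate `c ∉ W` is in an eager state. -/
def EagerState {n : ℕ} (A : Fin n → Finset C) (k : ℕ) (f : Fin n → ℚ) (W : Finset C)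
    (c : C) : Prop :=
  ¬ StarvingState A k f W c ∧ quota n k ≤ supp A f c ∧
    ∑ i ∈ approvers A c, (f i - gfun A k W i c) < quota n k

/-- A run of a voting rule in the PJR-Exact family: a sequence of distinct winners
`w 1, …, w k` together with fraction functions `f 0, …, f k` satisfying the three
defining conditions of the family. -/
structure PJRExactRun (n k : ℕ) (A : Fin n → Finset C) where
  w : ℕ → C
  f : ℕ → Fin n → ℚ
  /-- the selected candidates are pairwise distinct -/
  w_inj : ∀ j j' : ℕ, 1 ≤ j → j ≤ k → 1 ≤ j' → j' ≤ k → w j = w j' → j = j'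
  /-- initially each voter has her whole vote -/
  f_zero : ∀ i, f 0 i = 1
  /-- fractions stay non-negative -/
  f_nonneg : ∀ j, 1 ≤ j → j ≤ k → ∀ i, 0 ≤ f j i
  /-- fractions never increase -/
  f_mono : ∀ j, 1 ≤ j → j ≤ k → ∀ i, f j i ≤ f (j - 1) i
  /-- if the remaining support of the winner exceeds the quota, exactly `q` votes are removed -/
  remove_big : ∀ j, 1 ≤ j → j ≤ k → quota n k < supp A (f (j - 1)) (w j) →
    ∑ i ∈ approvers A (w j), (f (j - 1) i - f j i) = quota n k
  /-- if the remaining support of the winner is at most the quota, all of it is removed -/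
  remove_small : ∀ j, 1 ≤ j → j ≤ k → supp A (f (j - 1)) (w j) ≤ quota n k →
    ∀ i, w j ∈ A i → f j i = 0
  /-- voters not approving the winner keep their fractions -/
  f_untouched : ∀ j, 1 ≤ j → j ≤ k → ∀ i, w j ∉ A i → f j i = f (j - 1) i
  /-- if some unelected candidate has remaining support at least `q`,
  then so has the selected one -/
  greedy : ∀ j, 1 ≤ j → j ≤ k →
    (∃ c, c ∉ Wset w (j - 1) ∧ quota n k ≤ supp A (f (j - 1)) c) →
    quota n k ≤ supp A (f (j - 1)) (w j)

/-- Iteration `j` of a PJR-Exact run is normal. -/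
def NormalIteration {n k : ℕ} {A : Fin n → Finset C} (R : PJRExactRun n k A) (j : ℕ) : Prop :=
  NormalState A k (R.f (j - 1)) (Wset R.w (j - 1)) (R.w j) ∧
  ∀ i : Fin n, R.w j ∈ A i →
    (A i ∩ Wset R.w (j - 1)).card < dissatVoter A k (Wset R.w (j - 1)) i (R.w j) →
    ((dissatVoter A k (Wset R.w (j - 1)) i (R.w j) : ℚ) - ((A i ∩ Wset R.w j).card : ℚ)) /
      (dissatVoter A k (Wset R.w (j - 1)) i (R.w j) : ℚ) ≤ R.f j i

section Dissatisfaction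

variable {C : Type*} [DecidableEq C] {n : ℕ} (A : Fin n → Finset C) (k : ℕ)

def underrepresented (W : Finset C) (c : C) (ℓ : ℕ) : Finset (Fin n) :=
  univ.filter (fun i => c ∈ A i ∧ (A i ∩ W).card < ℓ)

lemma underrepresented_subset_approvers (W : Finset C) (c : C) (ℓ : ℕ) :
    underrepresented A W c ℓ ⊆ approvers A c :=
  fun _ hi => by simp only [underrepresented, approvers, mem_filter] at hi ⊢; exact ⟨hi.1, hi.2.1⟩

lemma underrepresented_mono {W W' : Finset C} (hW : W ⊆ W') (c : C) {ℓ ℓ' : ℕ} (hℓ : ℓ ≤ ℓ') :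
    underrepresented A W' c ℓ ⊆ underrepresented A W c ℓ' := by
  intro i hi
  simp only [underrepresented, mem_filter] at hi ⊢
  exact ⟨hi.1, hi.2.1, ((card_le_card (inter_subset_inter_left hW)).trans_lt hi.2.2).trans_le hℓ⟩

lemma mem_dissatSet_iff (W : Finset C) (c : C) (ℓ : ℕ) :
    ℓ ∈ dissatSet A k W c ↔ ℓ = k * (underrepresented A W c ℓ).card / n :=
  Iff.rfl

lemma mul_card_underrepresented_div_le (W : Finset C) (c : C) (ℓ : ℕ) :
    k * (underrepresented A W c ℓ).card / n ≤ k := by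
  refine Nat.div_le_of_le_mul ?_
  rw [mul_comm n]
  exact Nat.mul_le_mul_left k ((card_le_univ _).trans (Fintype.card_fin n).le)

lemma bddAbove_dissatSet (W : Finset C) (c : C) : BddAbove (dissatSet A k W c) :=
  ⟨k, fun ℓ hℓ => hℓ.trans_le (mul_card_underrepresented_div_le A k W c ℓ)⟩

lemma dissat_mem_dissatSet (W : Finset C) (c : C) : dissat A k W c ∈ dissatSet A k W c :=
  Nat.sSup_mem ⟨0, by simp [mem_dissatSet_iff, underrepresented]⟩ (bddAbove_dissatSet A k W c)

/-- `dissat` is the greatest fixpoint of a monotone map bounded by `k`, so it dominates every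
post-fixpoint. -/
lemma le_dissat_of_le {W : Finset C} {c : C} {ℓ : ℕ}
    (h : ℓ ≤ k * (underrepresented A W c ℓ).card / n) : ℓ ≤ dissat A k W c := by
  set F : ℕ → ℕ := fun m => k * (underrepresented A W c m).card / n
  have hF : Monotone F := fun a b hab =>
    Nat.div_le_div_right (Nat.mul_le_mul_left k (card_le_card
      (underrepresented_mono A subset_rfl c hab)))
  set S : Set ℕ := {m | m ≤ F m}
  have hS : BddAbove S := ⟨k, fun m hm => hm.trans (mul_card_underrepresented_div_le A k W c m)⟩
  have hM : sSup S ∈ S := Nat.sSup_mem ⟨ℓ, h⟩ hS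
  have hfix : sSup S = F (sSup S) := le_antisymm hM (le_csSup hS (hF hM))
  exact (le_csSup hS h).trans (le_csSup (bddAbove_dissatSet A k W c) hfix)

lemma dissat_anti {W W' : Finset C} (hW : W ⊆ W') (c : C) :
    dissat A k W' c ≤ dissat A k W c := by
  apply le_dissat_of_le
  calc dissat A k W' c = k * (underrepresented A W' c (dissat A k W' c)).card / n :=
        dissat_mem_dissatSet A k W' c
    _ ≤ _ := Nat.div_le_div_right (Nat.mul_le_mul_left k (card_le_card
        (underrepresented_mono A hW c le_rfl)))

lemma dissat_mul_le (W : Finset C) (c : C) :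
    dissat A k W c * n ≤ k * (underrepresented A W c (dissat A k W c)).card := by
  conv_lhs => rw [dissat_mem_dissatSet A k W c]
  exact Nat.div_mul_le_self _ _

lemma dissatVoter_le {W : Finset C} {b : ℕ} (h : ∀ c' ∉ W, dissat A k W c' ≤ b) (i : Fin n)
    (c : C) : dissatVoter A k W i c ≤ b :=
  Finset.sup_le fun c' hc' => h c' fun hW => (mem_sdiff.1 hc').2 (mem_insert_of_mem hW)

lemma exists_dissat_eq_dissatVoter {W : Finset C} {i : Fin n} {c : C}
    (h : 0 < dissatVoter A k W i c) :
    ∃ c' ∈ A i, c' ∉ W ∧ dissat A k W c' = dissatVoter A k W i c := by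
  have hne : (A i \ insert c W).Nonempty := by
    by_contra hem
    simp [dissatVoter, not_nonempty_iff_eq_empty.1 hem] at h
  obtain ⟨c', hc', hsup⟩ := exists_mem_eq_sup _ hne (dissat A k W)
  rw [mem_sdiff, mem_insert, not_or] at hc'
  exact ⟨c', hc'.1, hc'.2.2, hsup.symm⟩

end Dissatisfaction

lemma sub_div_le_sub_div_of_le {w x y : ℚ} (hw : 0 ≤ w) (hx : 0 < x) (hxy : x ≤ y) :
    (x - w) / x ≤ (y - w) / y := by
  rw [div_le_div_iff₀ hx (hx.trans_le hxy)]
  nlinarith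

section Invariant

variable {C : Type*} [DecidableEq C] {n : ℕ} (A : Fin n → Finset C) (k : ℕ)

def DissatBound (f : Fin n → ℚ) (W : Finset C) : Prop :=
  ∀ i c, c ∈ A i → c ∉ W → (A i ∩ W).card < dissat A k W c →
    ((dissat A k W c : ℚ) - (A i ∩ W).card) / dissat A k W c ≤ f i

variable {A k}

lemma DissatBound.sub_div_dissatVoter_le {f : Fin n → ℚ} {W : Finset C}
    (hb : DissatBound A k f W) {i : Fin n} {c : C} (hlt : (A i ∩ W).card < dissatVoter A k W i c) :
    ((dissatVoter A k W i c : ℚ) - (A i ∩ W).card) / dissatVoter A k W i c ≤ f i := by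
  obtain ⟨c', hc'A, hc'W, hc'⟩ := exists_dissat_eq_dissatVoter A k (hlt.trans_le' (Nat.zero_le _))
  rw [← hc'] at hlt ⊢
  exact hb i c' hc'A hc'W hlt

lemma Wset_zero (w : ℕ → C) : Wset w 0 = ∅ := by simp [Wset]

lemma Wset_succ (w : ℕ → C) (m : ℕ) : Wset w (m + 1) = insert (w (m + 1)) (Wset w m) := by
  have h := insert_Icc_right_eq_Icc_succ (show 1 ≤ Order.succ m by simp)
  rw [Order.succ_eq_add_one] at h
  rw [Wset, Wset, ← h, image_insert]

lemma PJRExactRun.f_nonneg_of_le (R : PJRExactRun n k A) {j : ℕ} (hj : j ≤ k) (i : Fin n) :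
    0 ≤ R.f j i := by
  rcases Nat.eq_zero_or_pos j with rfl | hj0
  · rw [R.f_zero]; exact zero_le_one
  · exact R.f_nonneg j hj0 hj i

lemma PJRExactRun.dissatBound_zero (R : PJRExactRun n k A) :
    DissatBound A k (R.f 0) (Wset R.w 0) := by
  intro i c _ _ hlt
  rw [Wset_zero, inter_empty, card_empty] at hlt ⊢
  rw [R.f_zero, Nat.cast_zero, sub_zero, div_self (by exact_mod_cast hlt.ne')]

lemma PJRExactRun.dissatBound_succ (R : PJRExactRun n k A) {m : ℕ} (hm : m + 1 ≤ k)
    (hb : DissatBound A k (R.f m) (Wset R.w m)) (hnormal : NormalIteration R (m + 1)) :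
    DissatBound A k (R.f (m + 1)) (Wset R.w (m + 1)) := by
  have hnormal' := hnormal.2
  simp only [Nat.add_sub_cancel] at hnormal'
  intro i c hcA hcW hlt
  have hsub : Wset R.w m ⊆ Wset R.w (m + 1) := Wset_succ R.w m ▸ subset_insert _ _
  have hcW' : c ∉ Wset R.w m := fun h => hcW (hsub h)
  have hanti := dissat_anti A k hsub c
  have hpos : (0 : ℚ) < dissat A k (Wset R.w (m + 1)) c := by
    exact_mod_cast hlt.trans_le' (Nat.zero_le _)
  by_cases hwi : R.w (m + 1) ∈ A i
  · have hc_ne : c ≠ R.w (m + 1) := fun h => hcW (h ▸ Wset_succ R.w m ▸ mem_insert_self _ _)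
    have hL : dissat A k (Wset R.w m) c ≤ dissatVoter A k (Wset R.w m) i (R.w (m + 1)) :=
      le_sup (mem_sdiff.2 ⟨hcA, by simp [hc_ne, hcW']⟩)
    have hcard : (A i ∩ Wset R.w m).card ≤ (A i ∩ Wset R.w (m + 1)).card :=
      card_le_card (inter_subset_inter_left hsub)
    refine (sub_div_le_sub_div_of_le (Nat.cast_nonneg _) hpos ?_).trans
      (hnormal' i hwi (by omega))
    exact_mod_cast hanti.trans hL
  · have hinter : A i ∩ Wset R.w (m + 1) = A i ∩ Wset R.w m := by
      rw [Wset_succ, inter_insert_of_notMem hwi]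
    rw [R.f_untouched (m + 1) (Nat.le_add_left 1 m) hm i hwi]
    rw [hinter] at hlt ⊢
    exact (sub_div_le_sub_div_of_le (Nat.cast_nonneg _) hpos (by exact_mod_cast hanti)).trans
      (hb i c hcA hcW' (hlt.trans_le hanti))

lemma PJRExactRun.dissatBound (R : PJRExactRun n k A) {j : ℕ} (hj : j ≤ k)
    (hnormal : ∀ j', 1 ≤ j' → j' ≤ j → NormalIteration R j') :
    DissatBound A k (R.f j) (Wset R.w j) := by
  induction j with
  | zero => exact R.dissatBound_zero
  | succ m ih =>
    exact R.dissatBound_succ hj (ih (by omega) fun j' h1 h2 => hnormal j' h1 (by omega))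
      (hnormal (m + 1) (by omega) le_rfl)

end Invariant

lemma quota_le_of_mul_le {n k ℓ s : ℕ} (h : ℓ * n ≤ k * s) (hℓ : 0 < ℓ) :
    quota n k ≤ s / ℓ := by
  rcases Nat.eq_zero_or_pos k with rfl | hk
  · rw [quota, Nat.cast_zero, div_zero]; positivity
  · rw [quota, div_le_div_iff₀ (by exact_mod_cast hk) (by exact_mod_cast hℓ)]
    rw [mul_comm (n : ℚ), mul_comm (s : ℚ)]
    exact_mod_cast h

section NormalState

variable {C : Type*} [DecidableEq C] {n : ℕ} {A : Fin n → Finset C} {k : ℕ} {f : Fin n → ℚ}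
  {W : Finset C}

lemma DissatBound.gfun_le (hb : DissatBound A k f W) (hf : ∀ i, 0 ≤ f i) (i : Fin n) (c : C) :
    gfun A k W i c ≤ f i := by
  unfold gfun
  split_ifs with hle
  · exact hf i
  · push Not at hle
    have hL : (0 : ℚ) < dissatVoter A k W i c := by exact_mod_cast hle.trans_le' (Nat.zero_le _)
    exact (div_le_div_of_nonneg_right (by linarith) hL.le).trans (hb.sub_div_dissatVoter_le hle)

/-- The fraction `f i` exceeds `g_i(c)` by at least `1 / ℓ(i, c)`, and `ℓ(i, c) ≤ ℓ(c)` by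
maximality of `c`. -/
lemma DissatBound.inv_dissat_le_sub_gfun (hb : DissatBound A k f W) {c : C} (hc : c ∉ W)
    (hmax : ∀ c' ∉ W, dissat A k W c' ≤ dissat A k W c) {i : Fin n} (hci : c ∈ A i)
    (hlt : (A i ∩ W).card < dissat A k W c) :
    1 / (dissat A k W c : ℚ) ≤ f i - gfun A k W i c := by
  have hℓ : (0 : ℚ) < dissat A k W c := by exact_mod_cast hlt.trans_le' (Nat.zero_le _)
  have hlt' : ((A i ∩ W).card : ℚ) + 1 ≤ dissat A k W c := by exact_mod_cast hlt
  unfold gfun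
  split_ifs with hle
  · calc 1 / (dissat A k W c : ℚ)
        ≤ ((dissat A k W c : ℚ) - (A i ∩ W).card) / dissat A k W c := by gcongr; linarith
      _ ≤ f i - 0 := by rw [sub_zero]; exact hb i c hci hc hlt
  · push Not at hle
    have hL : (0 : ℚ) < dissatVoter A k W i c := by exact_mod_cast hle.trans_le' (Nat.zero_le _)
    have hLℓ : (dissatVoter A k W i c : ℚ) ≤ dissat A k W c := by
      exact_mod_cast dissatVoter_le A k hmax i c
    calc 1 / (dissat A k W c : ℚ) ≤ 1 / dissatVoter A k W i c := by gcongr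
      _ = ((dissatVoter A k W i c : ℚ) - (A i ∩ W).card) / dissatVoter A k W i c -
            ((dissatVoter A k W i c : ℚ) - (A i ∩ W).card - 1) / dissatVoter A k W i c := by ring
      _ ≤ _ := by gcongr; exact hb.sub_div_dissatVoter_le hle

lemma DissatBound.normalState (hb : DissatBound A k f W) (hf : ∀ i, 0 ≤ f i) {c : C}
    (hc : c ∉ W) (h1 : 1 ≤ dissat A k W c)
    (hmax : ∀ c' ∉ W, dissat A k W c' ≤ dissat A k W c) :
    NormalState A k f W c := by
  refine ⟨fun i _ hlt => hb.sub_div_dissatVoter_le hlt, ?_⟩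
  set S := underrepresented A W c (dissat A k W c)
  calc quota n k ≤ S.card / (dissat A k W c : ℚ) := quota_le_of_mul_le (dissat_mul_le A k W c) h1
    _ = ∑ i ∈ S, 1 / (dissat A k W c : ℚ) := by rw [sum_const, nsmul_eq_mul, mul_one_div]
    _ ≤ ∑ i ∈ S, (f i - gfun A k W i c) := sum_le_sum fun i hi => by
        simp only [S, underrepresented, mem_filter] at hi
        exact hb.inv_dissat_le_sub_gfun hc hmax hi.2.1 hi.2.2
    _ ≤ ∑ i ∈ approvers A c, (f i - gfun A k W i c) :=
        sum_le_sum_of_subset_of_nonneg (underrepresented_subset_approvers A W c _)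
          fun i _ _ => sub_nonneg.2 (hb.gfun_le hf i c)

end NormalState

theorem max_dissat_is_normal_general {C : Type*} [DecidableEq C] {n k : ℕ}
    (A : Fin n → Finset C) (R : PJRExactRun n k A)
    (j : ℕ) (hjk : j ≤ k - 1)
    (hnormal : ∀ j' : ℕ, 1 ≤ j' → j' ≤ j → NormalIteration R j')
    (c : C) (hc : c ∉ Wset R.w j)
    (h1 : 1 ≤ dissat A k (Wset R.w j) c)
    (hmax : ∀ c' : C, c' ∉ Wset R.w j →
      dissat A k (Wset R.w j) c' ≤ dissat A k (Wset R.w j) c) :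
    NormalState A k (R.f j) (Wset R.w j) c := by
  have hj : j ≤ k := hjk.trans (Nat.sub_le k 1)
  exact (R.dissatBound hj hnormal).normalState (R.f_nonneg_of_le hj) hc h1 hmax

/-- after `j` normal iterations, an unelected candidate with maximum
dissatisfaction level among unelected candidates, and with dissatisfaction level at
least 1, is in a normal state. -/
theorem max_dissat_is_normal {C : Type*} [Fintype C] [DecidableEq C] {n k : ℕ}
    (hn : 0 < n) (hk : 1 ≤ k) (hkC : k ≤ Fintype.card C)
    (A : Fin n → Finset C) (R : PJRExactRun n k A)
    (j : ℕ) (hjk : j ≤ k - 1)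
    (hnormal : ∀ j' : ℕ, 1 ≤ j' → j' ≤ j → NormalIteration R j')
    (c : C) (hc : c ∉ Wset R.w j)
    (h1 : 1 ≤ dissat A k (Wset R.w j) c)
    (hmax : ∀ c' : C, c' ∉ Wset R.w j →
      dissat A k (Wset R.w j) c' ≤ dissat A k (Wset R.w j) c) :
    NormalState A k (R.f j) (Wset R.w j) c :=
  max_dissat_is_normal_general A R j hjk hnormal c hc h1 hmax
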